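/- arXiv:1810.06497 — 2 statements merged into one kernel-verified Lean document; each statement's English description precedes it below -/
import Mathlib

section
/- For every nonnegative integer L and every nonzero complex number q that is not a root of unity, Σ_{n≥0} (-1)^n q^{(3n²-n)/2} (q³;q³)_L/((q;q)_{L-2n}(q³;q³)_n) = Σ_{j=-L}^{L} q^{2L-j} (L, j-1; j; q³)_2. -/
/-- The finite q-Pochhammer symbol `(a;q)_n`. -/
noncomputable def qPoch (a q : ℂ) (n : ℕ) : ℂ :=
  ∏ j ∈ Finset.range n, (1 - a * q ^ j)

/-- The infinite q-Pochhammer symbol `(a;q)_∞`. -/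
noncomputable def qPochInf (a q : ℂ) : ℂ :=
  ∏' j : ℕ, (1 - a * q ^ j)

/-- `1/(q;q)_n` for an integer `n`, with the convention that it is `0` for `n < 0`. -/
noncomputable def qPochInvZ (q : ℂ) (n : ℤ) : ℂ :=
  if 0 ≤ n then (qPoch q q n.toNat)⁻¹ else 0

/-- The q-trinomial coefficient `(L, b; a; q)_2`. -/
noncomputable def qTrinomial (L : ℕ) (b a : ℤ) (q : ℂ) : ℂ :=
  ∑' n : ℕ, q ^ ((n : ℤ) * ((n : ℤ) + b)) * qPoch q q L * qPochInvZ q (n : ℤ) *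
    qPochInvZ q ((n : ℤ) + a) * qPochInvZ q ((L : ℤ) - 2 * (n : ℤ) - a)

/-- The q-trinomial coefficient `T_n(L, a; q)`, where `s` is a fixed square root of `q`. -/
noncomputable def qTriT (n : ℤ) (L : ℕ) (a : ℤ) (q s : ℂ) : ℂ :=
  s ^ ((L : ℤ) * ((L : ℤ) - n) - a * (a - n)) * qTrinomial L (a - n) a q⁻¹

/-- The Gaussian (q-binomial) coefficient `[N choose k]_q`, zero unless `0 ≤ k ≤ N`. -/
noncomputable def qBinom (N k : ℤ) (q : ℂ) : ℂ :=
  if 0 ≤ k ∧ k ≤ N then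
    qPoch q q N.toNat * (qPoch q q k.toNat)⁻¹ * (qPoch q q (N - k).toNat)⁻¹
  else 0

/-- The quadratic form `Q(m,n) = 2m² + 6mn + 6n²` from Capparelli's theorems. -/
def Qcap (m n : ℕ) : ℕ := 2 * m ^ 2 + 6 * m * n + 6 * n ^ 2


section basic
variable {q : ℂ}

lemma qPoch_succ (a q : ℂ) (n : ℕ) : qPoch a q (n+1) = qPoch a q n * (1 - a * q ^ n) :=
  Finset.prod_range_succ _ _

lemma qPoch_ne_zero (hroot : ∀ k : ℕ, 0 < k → q ^ k ≠ 1) (n : ℕ) : qPoch q q n ≠ 0 := by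
  rw [qPoch]
  refine Finset.prod_ne_zero_iff.mpr fun j _ => ?_
  have := hroot (j+1) (Nat.succ_pos j)
  rw [pow_succ'] at this
  intro h
  apply this
  linear_combination -h

lemma qPochInvZ_natCast (q : ℂ) (n : ℕ) : qPochInvZ q (n : ℤ) = (qPoch q q n)⁻¹ := by
  simp [qPochInvZ]

lemma qPochInvZ_neg {t : ℤ} (ht : t < 0) (q : ℂ) : qPochInvZ q t = 0 := by
  simp [qPochInvZ, not_le.mpr ht]

lemma qPochInvZ_sub_one (hq : q ≠ 0) (hroot : ∀ k : ℕ, 0 < k → q ^ k ≠ 1) (t : ℤ) :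
    qPochInvZ q t - qPochInvZ q (t-1) = q ^ t * qPochInvZ q t := by
  rcases lt_trichotomy t 0 with h | h | h
  · have h2 : t - 1 < 0 := by omega
    rw [qPochInvZ_neg h, qPochInvZ_neg h2]
    ring
  · subst h
    have h2 : (0:ℤ) - 1 < 0 := by omega
    rw [qPochInvZ_neg h2]
    simp [qPochInvZ, qPoch]
  · obtain ⟨n, rfl⟩ : ∃ n : ℕ, t = (n+1 : ℕ) := ⟨(t-1).toNat, by omega⟩
    have h1 : ((n+1 : ℕ) : ℤ) - 1 = (n : ℤ) := by push_cast; ring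
    rw [h1, qPochInvZ_natCast, qPochInvZ_natCast, qPoch_succ]
    have hn1 := qPoch_ne_zero hroot n
    have hn2 : (1 - q * q ^ n) ≠ 0 := by
      intro h
      exact hroot (n+1) (Nat.succ_pos n) (by rw [pow_succ']; linear_combination -h)
    rw [zpow_natCast]
    field_simp
    rw [pow_succ']
    ring

lemma qPochInvZ_succ (hq : q ≠ 0) (hroot : ∀ k : ℕ, 0 < k → q ^ k ≠ 1) (n : ℕ) :
    (qPoch q q (n+1))⁻¹ = (qPoch q q n)⁻¹ * (1 - q ^ (n+1))⁻¹ := by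
  rw [qPoch_succ, mul_inv, pow_succ']

end basic

lemma one_sub_pow_ne {q : ℂ} (hroot : ∀ k : ℕ, 0 < k → q ^ k ≠ 1) (m : ℕ) (hm : 0 < m) :
    (1 - q ^ m) ≠ 0 := fun h => hroot m hm (by linear_combination -h)

/-- summand of the finite Cauchy sum -/
noncomputable def cauchyT (q : ℂ) (c b : ℤ) (k : ℕ) : ℂ :=
  (-1:ℂ)^k * q ^ (k.choose 2) * (qPoch q q k)⁻¹ * qPochInvZ q (c-k) * qPochInvZ q (b-k)

lemma lemS {q : ℂ} (hq : q ≠ 0) (hroot : ∀ k : ℕ, 0 < k → q ^ k ≠ 1) (a : ℕ) (b : ℤ) :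
    ∑ k ∈ Finset.range (a+1), cauchyT q a b k
    = q ^ ((a:ℤ)*b) * (qPoch q q a)⁻¹ * qPochInvZ q b := by
  induction a generalizing b with
  | zero => simp [cauchyT, qPoch, qPochInvZ]
  | succ a ih =>
    have hP : ∀ n : ℕ, qPoch q q n ≠ 0 := qPoch_ne_zero hroot
    have hone := one_sub_pow_ne hroot
    have key : ∀ k ∈ Finset.range (a+2),
        cauchyT q (a+1) b k = (1 - q^(a+1))⁻¹ *
          (cauchyT q a b k + (-1:ℂ)^k * q ^ (k.choose 2) * q^(a+1-k) *
            qPochInvZ q ((k:ℤ)-1) * qPochInvZ q ((a:ℤ)+1-k) * qPochInvZ q (b-k)) := by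
      intro k hk
      rw [Finset.mem_range] at hk
      match k with
      | 0 =>
        have hm1 : ((0:ℕ):ℤ) - 1 < 0 := by norm_num
        rw [cauchyT, cauchyT, qPochInvZ_neg hm1]
        have e1 : ((a:ℤ)+1) - (0:ℕ) = ((a+1:ℕ):ℤ) := by push_cast; ring
        have e2 : ((a:ℤ)) - (0:ℕ) = ((a:ℕ):ℤ) := by push_cast; ring
        rw [e1, e2, qPochInvZ_natCast, qPochInvZ_natCast,
          qPochInvZ_succ hq hroot]
        ring
      | k+1 =>
        have hka : k ≤ a := by omega
        have e1 : ((a:ℤ)+1) - ((k+1:ℕ):ℤ) = (a:ℤ) - k := by push_cast; ring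
        have e2 : ((a:ℤ)) - ((k+1:ℕ):ℤ) = (a:ℤ) - k - 1 := by push_cast; ring
        have e3 : ((k+1:ℕ):ℤ) - 1 = ((k:ℕ):ℤ) := by push_cast; ring
        rw [cauchyT, cauchyT, e1, e2, e3, qPochInvZ_natCast]
        have bracket : (qPoch q q (k+1))⁻¹ * qPochInvZ q ((a:ℤ)-k)
            = (1 - q^(a+1))⁻¹ * ((qPoch q q (k+1))⁻¹ * qPochInvZ q ((a:ℤ)-k-1)
              + q^(a-k) * (qPoch q q k)⁻¹ * qPochInvZ q ((a:ℤ)-k)) := by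
          rcases Nat.lt_or_ge k a with hlt | hge
          · obtain ⟨d, hd⟩ : ∃ d, a - k = d + 1 := ⟨a - k - 1, by omega⟩
            have e4 : (a:ℤ) - k = ((d+1:ℕ):ℤ) := by push_cast; omega
            have e5 : ((d+1:ℕ):ℤ) - 1 = ((d:ℕ):ℤ) := by push_cast; ring
            have e6 : a + 1 = k + d + 2 := by omega
            rw [e4, e5, e6, hd, qPochInvZ_natCast, qPochInvZ_natCast]
            rw [qPoch_succ q q k, qPoch_succ q q d]
            have h1 := hP k
            have h2 := hP d
            have h3 : (1 - q * q ^ k) ≠ 0 := by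
              have := one_sub_pow_ne hroot (k+1) (by omega)
              rwa [pow_succ'] at this
            have h4 : (1 - q * q ^ d) ≠ 0 := by
              have := one_sub_pow_ne hroot (d+1) (by omega)
              rwa [pow_succ'] at this
            have h5 := one_sub_pow_ne hroot (k+d+2) (by omega)
            rw [eq_inv_mul_iff_mul_eq₀ h5]
            field_simp
            ring
          · have hka' : k = a := by omega
            subst hka'
            have e4 : (k:ℤ) - k = ((0:ℕ):ℤ) := by push_cast; ring
            have e5 : ((0:ℕ):ℤ) - 1 < 0 := by norm_num
            rw [e4, qPochInvZ_natCast, qPochInvZ_neg e5,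
              qPochInvZ_succ hq hroot]
            have e6 : k - k = 0 := by omega
            rw [e6]
            simp [qPoch]
            ring
        calc (-1:ℂ)^(k+1) * q ^ ((k+1).choose 2) * (qPoch q q (k+1))⁻¹ *
              qPochInvZ q ((a:ℤ)-k) * qPochInvZ q (b-(k+1:ℕ))
            = ((-1:ℂ)^(k+1) * q ^ ((k+1).choose 2) * qPochInvZ q (b-(k+1:ℕ))) *
              ((qPoch q q (k+1))⁻¹ * qPochInvZ q ((a:ℤ)-k)) := by ring
          _ = _ := by
              rw [bracket, show a + 1 - (k+1) = a - k from by omega]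
              ring
    have hc : ((a+1:ℕ):ℤ) = (a:ℤ)+1 := by push_cast; ring
    rw [hc, Finset.sum_congr rfl key, ← Finset.mul_sum, Finset.sum_add_distrib]
    have hU : ∑ k ∈ Finset.range (a+1+1), cauchyT q (↑a) b k
        = q ^ ((a:ℤ)*b) * (qPoch q q a)⁻¹ * qPochInvZ q b := by
      rw [Finset.sum_range_succ]
      have hz : cauchyT q (↑a) b (a+1) = 0 := by
        have ht : (a:ℤ) - ((a+1:ℕ):ℤ) < 0 := by push_cast; omega
        rw [cauchyT, qPochInvZ_neg ht]
        ring
      rw [hz, add_zero, ih b]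
    have hV : ∑ k ∈ Finset.range (a+1+1),
        (-1:ℂ)^k * q ^ (k.choose 2) * q^(a+1-k) *
          qPochInvZ q ((k:ℤ)-1) * qPochInvZ q ((a:ℤ)+1-k) * qPochInvZ q (b-k)
        = -(q^a * (q ^ ((a:ℤ)*(b-1)) * (qPoch q q a)⁻¹ * qPochInvZ q (b-1))) := by
      rw [Finset.sum_range_succ']
      have hz : (-1:ℂ)^0 * q ^ (Nat.choose 0 2) * q^(a+1-0) *
          qPochInvZ q (((0:ℕ):ℤ)-1) * qPochInvZ q ((a:ℤ)+1-(0:ℕ)) * qPochInvZ q (b-(0:ℕ)) = 0 := by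
        have ht : ((0:ℕ):ℤ) - 1 < 0 := by norm_num
        rw [qPochInvZ_neg ht]
        ring
      rw [hz, add_zero]
      have hcong : ∀ k ∈ Finset.range (a+1),
          (-1:ℂ)^(k+1) * q ^ ((k+1).choose 2) * q^(a+1-(k+1)) *
            qPochInvZ q (((k+1:ℕ):ℤ)-1) * qPochInvZ q ((a:ℤ)+1-((k+1:ℕ):ℤ)) * qPochInvZ q (b-((k+1:ℕ):ℤ))
          = -q^a * cauchyT q (↑a) (b-1) k := by
        intro k hk
        rw [Finset.mem_range] at hk
        have e1 : ((k+1:ℕ):ℤ) - 1 = ((k:ℕ):ℤ) := by push_cast; ring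
        have e2 : (a:ℤ)+1-((k+1:ℕ):ℤ) = (a:ℤ) - k := by push_cast; ring
        have e3 : b-((k+1:ℕ):ℤ) = (b-1) - ((k:ℕ):ℤ) := by push_cast; ring
        have e4 : a + 1 - (k+1) = a - k := by omega
        have e5 : (k+1).choose 2 = k.choose 2 + k := by
          rw [Nat.choose_succ_succ, Nat.choose_one_right, Nat.add_comm]
        have e6 : q ^ (k.choose 2 + k) * q ^ (a - k) = q ^ (k.choose 2) * q ^ a := by
          rw [← pow_add, ← pow_add, show k.choose 2 + k + (a-k) = k.choose 2 + a from by omega]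
        rw [e1, e2, e3, e4, e5, qPochInvZ_natCast, cauchyT]
        calc (-1:ℂ)^(k+1) * q ^ (k.choose 2 + k) * q^(a-k) *
              (qPoch q q k)⁻¹ * qPochInvZ q ((a:ℤ)-k) * qPochInvZ q ((b-1)-k)
            = -((-1:ℂ)^k * (q ^ (k.choose 2 + k) * q^(a-k)) *
              (qPoch q q k)⁻¹ * qPochInvZ q ((a:ℤ)-k) * qPochInvZ q ((b-1)-k)) := by
              rw [pow_succ]; ring
          _ = _ := by rw [e6]; ring
      rw [Finset.sum_congr rfl hcong, ← Finset.mul_sum, ih (b-1)]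
      ring
    rw [hU, hV, qPochInvZ_succ hq hroot]
    have s1 : (q:ℂ)^a * q ^ ((a:ℤ)*(b-1)) = q ^ ((a:ℤ)*b) := by
      rw [← zpow_natCast q a, ← zpow_add₀ hq]
      congr 1
      ring
    have s2 : (q:ℂ) ^ (((a:ℤ)+1)*b) = q ^ ((a:ℤ)*b) * q ^ b := by
      rw [← zpow_add₀ hq]
      congr 1
      ring
    have hsub := qPochInvZ_sub_one hq hroot b
    rw [s2, ← s1]
    linear_combination ((1 - q^(a+1))⁻¹ * (qPoch q q a)⁻¹ * (q^a * q^((a:ℤ)*(b-1)))) * hsub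

lemma pow3_hyp {q : ℂ} (hroot : ∀ k : ℕ, 0 < k → q ^ k ≠ 1) :
    ∀ k : ℕ, 0 < k → (q^3) ^ k ≠ 1 := by
  intro k hk
  rw [← pow_mul]
  exact hroot (3*k) (by omega)

lemma lemA {q : ℂ} (hq : q ≠ 0) (hroot : ∀ k : ℕ, 0 < k → q ^ k ≠ 1) (N : ℕ) :
    ∑ x ∈ Finset.range (N+1) ×ˢ Finset.range (N+1),
      q^(x.1 + 2*x.2) * qPochInvZ (q^3) ((N:ℤ) - x.1 - x.2) *
        (qPoch (q^3) (q^3) x.1)⁻¹ * (qPoch (q^3) (q^3) x.2)⁻¹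
    = (qPoch q q N)⁻¹ := by
  have hq3 : (q:ℂ)^3 ≠ 0 := pow_ne_zero _ hq
  have hroot3 := pow3_hyp hroot
  induction N with
  | zero => simp [qPochInvZ, qPoch]
  | succ N ih =>
    set f : ℕ × ℕ → ℂ := fun x =>
      q^(x.1 + 2*x.2) * qPochInvZ (q^3) (((N+1:ℕ):ℤ) - x.1 - x.2) *
        (qPoch (q^3) (q^3) x.1)⁻¹ * (qPoch (q^3) (q^3) x.2)⁻¹ with hf
    set g : ℕ × ℕ → ℂ := fun x =>
      q^(x.1 + 2*x.2) * qPochInvZ (q^3) ((N:ℤ) - x.1 - x.2) *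
        (qPoch (q^3) (q^3) x.1)⁻¹ * (qPoch (q^3) (q^3) x.2)⁻¹ with hg
    set s : Finset (ℕ × ℕ) := Finset.range (N+2) ×ˢ Finset.range (N+2) with hs
    have hmem : ∀ x : ℕ × ℕ, x ∈ s ↔ (x.1 ≤ N+1 ∧ x.2 ≤ N+1) := by
      intro x
      simp [hs, Finset.mem_product, Finset.mem_range]
      omega
    -- step (i): extending the box for g
    have hA1 : ∑ x ∈ s, g x = (qPoch q q N)⁻¹ := by
      rw [← ih]
      apply (Finset.sum_subset _ _).symm
      · intro x hx
        rw [Finset.mem_product, Finset.mem_range, Finset.mem_range] at hx ⊢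
        exact ⟨by omega, by omega⟩
      · intro x hx hx'
        rw [Finset.mem_product, Finset.mem_range, Finset.mem_range] at hx'
        rw [hmem] at hx
        have ht : (N:ℤ) - x.1 - x.2 < 0 := by omega
        rw [hg]
        simp only
        rw [qPochInvZ_neg ht]
        ring
    -- step (ii)+(iii): A₂ - A₁ = q^(N+1) * A₂
    have hdiff : ∑ x ∈ s, f x - ∑ x ∈ s, g x = q^(N+1) * ∑ x ∈ s, f x := by
      rw [← Finset.sum_sub_distrib, Finset.mul_sum]
      have hterm : ∀ x ∈ s, f x - g x =
          q^(x.1 + 2*x.2) * ((q^3) ^ (((N+1:ℕ):ℤ) - x.1 - x.2) *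
            qPochInvZ (q^3) (((N+1:ℕ):ℤ) - x.1 - x.2)) *
            (qPoch (q^3) (q^3) x.1)⁻¹ * (qPoch (q^3) (q^3) x.2)⁻¹ := by
        intro x _
        have hsub := qPochInvZ_sub_one hq3 hroot3 (((N+1:ℕ):ℤ) - x.1 - x.2)
        have e1 : ((N+1:ℕ):ℤ) - x.1 - x.2 - 1 = (N:ℤ) - x.1 - x.2 := by push_cast; ring
        rw [e1] at hsub
        rw [hf, hg]
        simp only
        linear_combination (q^(x.1 + 2*x.2) * (qPoch (q^3) (q^3) x.1)⁻¹ * (qPoch (q^3) (q^3) x.2)⁻¹) * hsub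
      rw [Finset.sum_congr rfl hterm]
      -- restrict both sides to the filter, then bijection
      set t : Finset (ℕ × ℕ) := s.filter (fun x => x.1 + x.2 ≤ N+1) with htdef
      have hL : ∑ x ∈ s, q^(x.1 + 2*x.2) * ((q^3) ^ (((N+1:ℕ):ℤ) - x.1 - x.2) *
            qPochInvZ (q^3) (((N+1:ℕ):ℤ) - x.1 - x.2)) *
            (qPoch (q^3) (q^3) x.1)⁻¹ * (qPoch (q^3) (q^3) x.2)⁻¹
          = ∑ x ∈ t, q^(x.1 + 2*x.2) * ((q^3) ^ (((N+1:ℕ):ℤ) - x.1 - x.2) *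
            qPochInvZ (q^3) (((N+1:ℕ):ℤ) - x.1 - x.2)) *
            (qPoch (q^3) (q^3) x.1)⁻¹ * (qPoch (q^3) (q^3) x.2)⁻¹ := by
        apply (Finset.sum_subset (Finset.filter_subset _ _) _).symm
        intro x hx hx'
        rw [Finset.mem_filter] at hx'
        have hgt : ¬ (x.1 + x.2 ≤ N+1) := fun h => hx' ⟨hx, h⟩
        have ht : ((N+1:ℕ):ℤ) - x.1 - x.2 < 0 := by
          push_cast
          omega
        rw [qPochInvZ_neg ht]
        ring
      have hR : ∑ x ∈ s, q^(N+1) * f x = ∑ x ∈ t, q^(N+1) * f x := by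
        apply (Finset.sum_subset (Finset.filter_subset _ _) _).symm
        intro x hx hx'
        rw [Finset.mem_filter] at hx'
        have hgt : ¬ (x.1 + x.2 ≤ N+1) := fun h => hx' ⟨hx, h⟩
        have ht : ((N+1:ℕ):ℤ) - x.1 - x.2 < 0 := by
          push_cast
          omega
        rw [hf]
        simp only
        rw [qPochInvZ_neg ht]
        ring
      rw [hL, hR]
      apply Finset.sum_nbij' (fun x : ℕ × ℕ => (x.2, N+1-x.1-x.2))
        (fun y : ℕ × ℕ => (N+1-y.1-y.2, y.1))
      · intro x hx
        rw [htdef, Finset.mem_filter, hmem] at hx ⊢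
        omega
      · intro y hy
        rw [htdef, Finset.mem_filter, hmem] at hy ⊢
        omega
      · intro x hx
        rw [htdef, Finset.mem_filter, hmem] at hx
        ext <;> simp <;> omega
      · intro y hy
        rw [htdef, Finset.mem_filter, hmem] at hy
        ext <;> simp <;> omega
      · intro x hx
        rw [htdef, Finset.mem_filter, hmem] at hx
        obtain ⟨⟨h1, h2⟩, h3⟩ := hx
        rw [hf]
        simp only
        set nn := N+1-x.1-x.2 with hnn
        have e1 : ((N+1:ℕ):ℤ) - x.1 - x.2 = ((nn:ℕ):ℤ) := by push_cast; omega
        have e2 : ((N+1:ℕ):ℤ) - (x.2:ℤ) - ((nn:ℕ):ℤ) = ((x.1 : ℕ) : ℤ) := by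
          push_cast; omega
        rw [e1, e2, zpow_natCast, qPochInvZ_natCast, qPochInvZ_natCast, ← pow_mul]
        have hn : N + 1 = x.1 + x.2 + nn := by omega
        rw [hn]
        ring
    have h1 := one_sub_pow_ne hroot (N+1) (by omega)
    have key : (∑ x ∈ s, f x) * (1 - q^(N+1)) = (qPoch q q N)⁻¹ := by
      linear_combination hdiff + hA1
    rw [qPochInvZ_succ hq hroot]
    exact (eq_mul_inv_iff_mul_eq₀ h1).mpr key

lemma lemB {q : ℂ} (hq : q ≠ 0) (hroot : ∀ k : ℕ, 0 < k → q ^ k ≠ 1) (M B : ℕ) (hMB : M ≤ B) :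
    ∑ x ∈ Finset.range (B+1) ×ˢ Finset.range (B+1),
      (-1:ℂ)^x.1 * (q^3) ^ (x.1.choose 2) * q^(x.1 + x.2) *
        (qPoch (q^3) (q^3) x.1)⁻¹ * (qPoch (q^3) (q^3) x.2)⁻¹ *
        qPochInvZ (q^3) ((M:ℤ) - 2*x.1 - x.2)
    = ∑ a ∈ Finset.range (B+1), q ^ ((M:ℤ) - a) * (q^3) ^ ((a:ℤ) * ((M:ℤ) - a)) *
        (qPoch (q^3) (q^3) a)⁻¹ * qPochInvZ (q^3) ((M:ℤ) - a) := by
  have hq3 : (q:ℂ)^3 ≠ 0 := pow_ne_zero _ hq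
  have hroot3 := pow3_hyp hroot
  set s : Finset (ℕ × ℕ) := Finset.range (B+1) ×ˢ Finset.range (B+1) with hs
  have hmem : ∀ x : ℕ × ℕ, x ∈ s ↔ (x.1 ≤ B ∧ x.2 ≤ B) := by
    intro x
    simp [hs, Finset.mem_product, Finset.mem_range]
  -- step 1: the intermediate sum
  have step1 : ∑ x ∈ s,
      (-1:ℂ)^x.1 * (q^3) ^ (x.1.choose 2) * q^(x.1 + x.2) *
        (qPoch (q^3) (q^3) x.1)⁻¹ * (qPoch (q^3) (q^3) x.2)⁻¹ *
        qPochInvZ (q^3) ((M:ℤ) - 2*x.1 - x.2)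
      = ∑ x ∈ s, q ^ ((M:ℤ) - x.2) * cauchyT (q^3) (x.2) ((M:ℤ) - x.2) x.1 := by
    rw [show (∑ x ∈ s, (-1:ℂ)^x.1 * (q^3) ^ (x.1.choose 2) * q^(x.1 + x.2) *
        (qPoch (q^3) (q^3) x.1)⁻¹ * (qPoch (q^3) (q^3) x.2)⁻¹ *
        qPochInvZ (q^3) ((M:ℤ) - 2*x.1 - x.2))
      = ∑ x ∈ s.filter (fun x => 2*x.1 + x.2 ≤ M), (-1:ℂ)^x.1 * (q^3) ^ (x.1.choose 2) * q^(x.1 + x.2) *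
        (qPoch (q^3) (q^3) x.1)⁻¹ * (qPoch (q^3) (q^3) x.2)⁻¹ *
        qPochInvZ (q^3) ((M:ℤ) - 2*x.1 - x.2) from
      (Finset.sum_subset (Finset.filter_subset _ _) (by
        intro x hx hx'
        rw [Finset.mem_filter] at hx'
        have hgt : ¬ (2*x.1 + x.2 ≤ M) := fun h => hx' ⟨hx, h⟩
        have ht : (M:ℤ) - 2*x.1 - x.2 < 0 := by push_cast; omega
        rw [qPochInvZ_neg ht]
        ring)).symm]
    rw [show (∑ x ∈ s, q ^ ((M:ℤ) - x.2) * cauchyT (q^3) (x.2) ((M:ℤ) - x.2) x.1)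
      = ∑ x ∈ s.filter (fun x => x.1 ≤ x.2 ∧ x.2 + x.1 ≤ M),
          q ^ ((M:ℤ) - x.2) * cauchyT (q^3) (x.2) ((M:ℤ) - x.2) x.1 from
      (Finset.sum_subset (Finset.filter_subset _ _) (by
        intro x hx hx'
        rw [Finset.mem_filter] at hx'
        have hgt : ¬ (x.1 ≤ x.2 ∧ x.2 + x.1 ≤ M) := fun h => hx' ⟨hx, h⟩
        rw [cauchyT]
        rcases Nat.lt_or_ge x.2 x.1 with hcase | hcase
        · have ht : (x.2:ℤ) - x.1 < 0 := by push_cast; omega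
          rw [qPochInvZ_neg ht]
          ring
        · have ht : ((M:ℤ) - x.2) - x.1 < 0 := by push_cast; omega
          rw [qPochInvZ_neg ht]
          ring)).symm]
    apply Finset.sum_nbij' (fun x : ℕ × ℕ => (x.1, M - x.1 - x.2))
      (fun y : ℕ × ℕ => (y.1, M - y.1 - y.2))
    · intro x hx
      rw [Finset.mem_filter, hmem] at hx ⊢
      omega
    · intro y hy
      rw [Finset.mem_filter, hmem] at hy ⊢
      omega
    · intro x hx
      rw [Finset.mem_filter, hmem] at hx
      ext <;> simp <;> omega
    · intro y hy
      rw [Finset.mem_filter, hmem] at hy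
      ext <;> simp <;> omega
    · intro x hx
      rw [Finset.mem_filter, hmem] at hx
      obtain ⟨⟨h1, h2⟩, h3⟩ := hx
      simp only
      rw [cauchyT]
      set aa := M - x.1 - x.2 with haa
      have e1 : (M:ℤ) - ((aa:ℕ):ℤ) = ((x.1 + x.2 : ℕ):ℤ) := by push_cast; omega
      have e2 : ((aa:ℕ):ℤ) - (x.1:ℤ) = (M:ℤ) - 2*x.1 - x.2 := by push_cast; omega
      have e3 : (M:ℤ) - ((aa:ℕ):ℤ) - (x.1:ℤ) = ((x.2:ℕ):ℤ) := by push_cast; omega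
      rw [e3, e2, e1, zpow_natCast, qPochInvZ_natCast]
      rw [pow_add]
      ring
  rw [step1, Finset.sum_product_right]
  apply Finset.sum_congr rfl
  intro a ha
  rw [Finset.mem_range] at ha
  dsimp only
  rw [← Finset.mul_sum]
  have hinner : ∑ k ∈ Finset.range (B+1), cauchyT (q^3) (a:ℤ) ((M:ℤ) - a) k
      = ∑ k ∈ Finset.range (a+1), cauchyT (q^3) (a:ℤ) ((M:ℤ) - a) k := by
    apply (Finset.sum_subset (by
      intro k hk
      rw [Finset.mem_range] at hk ⊢
      omega) (by
      intro k hk hk'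
      rw [Finset.mem_range] at hk hk'
      have ht : (a:ℤ) - k < 0 := by push_cast; omega
      rw [cauchyT, qPochInvZ_neg ht]
      ring)).symm
  rw [hinner, lemS hq3 hroot3 a ((M:ℤ) - a)]
  ring

lemma lemA' {q : ℂ} (hq : q ≠ 0) (hroot : ∀ k : ℕ, 0 < k → q ^ k ≠ 1) (L : ℕ) (t : ℤ)
    (ht : t ≤ L) :
    qPochInvZ q t = ∑ x ∈ Finset.range (L+1) ×ˢ Finset.range (L+1),
      q^(x.1 + 2*x.2) * qPochInvZ (q^3) (t - x.1 - x.2) *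
        (qPoch (q^3) (q^3) x.1)⁻¹ * (qPoch (q^3) (q^3) x.2)⁻¹ := by
  rcases lt_or_ge t 0 with hneg | hpos
  · rw [qPochInvZ_neg hneg]
    refine (Finset.sum_eq_zero ?_).symm
    intro x hx
    have h : t - x.1 - x.2 < 0 := by omega
    rw [qPochInvZ_neg h]
    ring
  · obtain ⟨N, rfl⟩ : ∃ N : ℕ, t = (N:ℤ) := ⟨t.toNat, (Int.toNat_of_nonneg hpos).symm⟩
    have hNL : N ≤ L := by omega
    rw [qPochInvZ_natCast, ← lemA hq hroot N]
    apply Finset.sum_subset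
    · intro x hx
      rw [Finset.mem_product, Finset.mem_range, Finset.mem_range] at hx ⊢
      exact ⟨by omega, by omega⟩
    · intro x hx hx'
      rw [Finset.mem_product, Finset.mem_range, Finset.mem_range] at hx hx'
      have h : (N:ℤ) - x.1 - x.2 < 0 := by push_cast; omega
      rw [qPochInvZ_neg h]
      ring

lemma exp3 (n : ℕ) : (3*n^2 - n)/2 = 3 * n.choose 2 + n := by
  have h2 : 2 * n.choose 2 = n * (n - 1) := by
    induction n with
    | zero => rfl
    | succ m ih =>
      rw [Nat.choose_succ_succ, Nat.choose_one_right, Nat.mul_add, ih]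
      cases m with
      | zero => rfl
      | succ k =>
        simp only [Nat.succ_sub_one]
        ring
  have h3 : 3*n^2 - n = 2*(3*n.choose 2 + n) := by
    have e : 2*(3*n.choose 2 + n) = 3*(2*n.choose 2) + 2*n := by ring
    rw [e, h2]
    cases n with
    | zero => rfl
    | succ m =>
      simp only [Nat.succ_sub_one]
      have e2 : 3*(m+1)^2 = 3*((m+1)*m) + 2*(m+1) + (m+1) := by ring
      omega
  rw [h3, Nat.mul_div_cancel_left _ (by norm_num : 0 < 2)]

lemma hQz {q : ℂ} (hq : q ≠ 0) (e : ℤ) : ((q:ℂ)^3)^e = q^(3*e) := by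
  rw [← zpow_natCast q 3, ← zpow_mul]
  norm_num

noncomputable def Fterm (q : ℂ) (L k : ℕ) (x : ℕ × ℕ) : ℂ :=
  (-1:ℂ)^k * (q^3)^(k.choose 2) * (qPoch (q^3) (q^3) k)⁻¹ * qPoch (q^3) (q^3) L *
    (q^k * q^(x.1+2*x.2)) * qPochInvZ (q^3) ((L:ℤ) - 2*k - x.1 - x.2) *
    (qPoch (q^3) (q^3) x.1)⁻¹ * (qPoch (q^3) (q^3) x.2)⁻¹

noncomputable def Dterm (q : ℂ) (L : ℕ) (x : ℕ × ℕ) : ℂ :=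
  (q^(2*x.1) * (qPoch (q^3) (q^3) x.1)⁻¹ * qPoch (q^3) (q^3) L) *
    (q ^ ((L:ℤ) - x.1 - x.2) * (q^3) ^ ((x.2:ℤ) * ((L:ℤ) - x.1 - x.2)) *
      (qPoch (q^3) (q^3) x.2)⁻¹ * qPochInvZ (q^3) ((L:ℤ) - x.1 - x.2))

lemma mainLHS (L : ℕ) (q : ℂ) (hq : q ≠ 0) (hroot : ∀ k : ℕ, 0 < k → q ^ k ≠ 1) :
    (∑' n : ℕ, (-1 : ℂ) ^ n * q ^ ((3 * n ^ 2 - n) / 2) * qPoch (q ^ 3) (q ^ 3) L *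
        qPochInvZ q ((L : ℤ) - 2 * n) * (qPoch (q ^ 3) (q ^ 3) n)⁻¹) =
    ∑ x ∈ Finset.range (L+1) ×ˢ Finset.range (L+1), Dterm q L x := by
  have hq3 : (q:ℂ)^3 ≠ 0 := pow_ne_zero _ hq
  have hroot3 := pow3_hyp hroot
  have h1 : (∑' n : ℕ, (-1 : ℂ) ^ n * q ^ ((3 * n ^ 2 - n) / 2) * qPoch (q ^ 3) (q ^ 3) L *
      qPochInvZ q ((L : ℤ) - 2 * n) * (qPoch (q ^ 3) (q ^ 3) n)⁻¹)
      = ∑ k ∈ Finset.range (L+1), (-1 : ℂ) ^ k * q ^ ((3 * k ^ 2 - k) / 2) * qPoch (q ^ 3) (q ^ 3) L *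
        qPochInvZ q ((L : ℤ) - 2 * k) * (qPoch (q ^ 3) (q ^ 3) k)⁻¹ := by
    apply tsum_eq_sum
    intro b hb
    rw [Finset.mem_range] at hb
    have h : (L:ℤ) - 2*b < 0 := by push_cast; omega
    rw [qPochInvZ_neg h]
    ring
  rw [h1]
  have h2 : ∀ k ∈ Finset.range (L+1),
      (-1 : ℂ) ^ k * q ^ ((3 * k ^ 2 - k) / 2) * qPoch (q ^ 3) (q ^ 3) L *
        qPochInvZ q ((L : ℤ) - 2 * k) * (qPoch (q ^ 3) (q ^ 3) k)⁻¹
      = ∑ x ∈ Finset.range (L+1) ×ˢ Finset.range (L+1), Fterm q L k x := by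
    intro k hk
    rw [Finset.mem_range] at hk
    rw [exp3 k, pow_add, pow_mul]
    rw [lemA' hq hroot L ((L:ℤ)-2*k) (by omega)]
    rw [Finset.mul_sum, Finset.sum_mul]
    apply Finset.sum_congr rfl
    intro x hx
    rw [Fterm]
    ring
  rw [Finset.sum_congr rfl h2]
  have h3 : ∀ k ∈ Finset.range (L+1),
      (∑ x ∈ Finset.range (L+1) ×ˢ Finset.range (L+1), Fterm q L k x)
      = ∑ p ∈ Finset.range (L+1), ∑ m ∈ Finset.range (L+1), Fterm q L k (m,p) := by
    intro k _
    rw [Finset.sum_product]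
    exact Finset.sum_comm
  rw [Finset.sum_congr rfl h3, Finset.sum_comm]
  have h5 : ∀ p ∈ Finset.range (L+1),
      (∑ k ∈ Finset.range (L+1), ∑ m ∈ Finset.range (L+1), Fterm q L k (m,p))
      = (q^(2*p) * (qPoch (q^3) (q^3) p)⁻¹ * qPoch (q^3) (q^3) L) *
        ∑ a ∈ Finset.range (L+1), q ^ (((L:ℤ)-p) - a) * (q^3)^((a:ℤ)*(((L:ℤ)-p)-a)) *
          (qPoch (q^3) (q^3) a)⁻¹ * qPochInvZ (q^3) (((L:ℤ)-p)-a) := by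
    intro p hp
    rw [Finset.mem_range] at hp
    have ec : ((L-p:ℕ):ℤ) = (L:ℤ) - p := by omega
    have e1 : ∀ y ∈ Finset.range (L+1) ×ˢ Finset.range (L+1),
        Fterm q L y.1 (y.2, p) = (q^(2*p) * (qPoch (q^3) (q^3) p)⁻¹ * qPoch (q^3) (q^3) L) *
          ((-1:ℂ)^y.1 * (q^3) ^ (y.1.choose 2) * q^(y.1 + y.2) *
            (qPoch (q^3) (q^3) y.1)⁻¹ * (qPoch (q^3) (q^3) y.2)⁻¹ *
            qPochInvZ (q^3) (((L-p:ℕ):ℤ) - 2*y.1 - y.2)) := by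
      intro y _
      rw [Fterm, ec]
      have ea : (L:ℤ) - ↑p - 2*↑y.1 - ↑y.2 = (L:ℤ) - 2*↑y.1 - ↑y.2 - ↑p := by ring
      rw [ea]
      simp only
      rw [pow_add, pow_add]
      ring
    calc ∑ k ∈ Finset.range (L+1), ∑ m ∈ Finset.range (L+1), Fterm q L k (m,p)
        = ∑ y ∈ Finset.range (L+1) ×ˢ Finset.range (L+1), Fterm q L y.1 (y.2, p) := by
          rw [Finset.sum_product]
      _ = ∑ y ∈ Finset.range (L+1) ×ˢ Finset.range (L+1),
            (q^(2*p) * (qPoch (q^3) (q^3) p)⁻¹ * qPoch (q^3) (q^3) L) *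
            ((-1:ℂ)^y.1 * (q^3) ^ (y.1.choose 2) * q^(y.1 + y.2) *
              (qPoch (q^3) (q^3) y.1)⁻¹ * (qPoch (q^3) (q^3) y.2)⁻¹ *
              qPochInvZ (q^3) (((L-p:ℕ):ℤ) - 2*y.1 - y.2)) := Finset.sum_congr rfl e1
      _ = (q^(2*p) * (qPoch (q^3) (q^3) p)⁻¹ * qPoch (q^3) (q^3) L) *
            ∑ y ∈ Finset.range (L+1) ×ˢ Finset.range (L+1),
            ((-1:ℂ)^y.1 * (q^3) ^ (y.1.choose 2) * q^(y.1 + y.2) *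
              (qPoch (q^3) (q^3) y.1)⁻¹ * (qPoch (q^3) (q^3) y.2)⁻¹ *
              qPochInvZ (q^3) (((L-p:ℕ):ℤ) - 2*y.1 - y.2)) := by
          rw [Finset.mul_sum]
      _ = _ := by
          rw [lemB hq hroot (L-p) L (by omega)]
          apply congrArg
          apply Finset.sum_congr rfl
          intro a _
          rw [ec]
  rw [Finset.sum_congr rfl h5, Finset.sum_product]
  apply Finset.sum_congr rfl
  intro p hp
  rw [Finset.mul_sum]
  apply Finset.sum_congr rfl
  intro a ha
  rw [Dterm]

noncomputable def Rterm (q : ℂ) (L : ℕ) (y : ℤ × ℕ) : ℂ :=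
  q ^ (2*(L:ℤ) - y.1) * ((q^3) ^ ((y.2:ℤ) * ((y.2:ℤ) + (y.1 - 1))) * qPoch (q^3) (q^3) L *
    qPochInvZ (q^3) (y.2:ℤ) * qPochInvZ (q^3) ((y.2:ℤ) + y.1) *
    qPochInvZ (q^3) ((L:ℤ) - 2*(y.2:ℤ) - y.1))

lemma mainRHS (L : ℕ) (q : ℂ) (hq : q ≠ 0) (hroot : ∀ k : ℕ, 0 < k → q ^ k ≠ 1) :
    (∑ j ∈ Finset.Icc (-(L : ℤ)) (L : ℤ),
      q ^ (2 * (L : ℤ) - j) * qTrinomial L (j - 1) j (q ^ 3)) =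
    ∑ x ∈ Finset.range (L+1) ×ˢ Finset.range (L+1), Dterm q L x := by
  have hq3 : (q:ℂ)^3 ≠ 0 := pow_ne_zero _ hq
  have hroot3 := pow3_hyp hroot
  have r1 : ∀ j ∈ Finset.Icc (-(L : ℤ)) (L : ℤ),
      q ^ (2 * (L : ℤ) - j) * qTrinomial L (j - 1) j (q ^ 3)
      = ∑ n ∈ Finset.range (L+1), Rterm q L (j, n) := by
    intro j hj
    rw [Finset.mem_Icc] at hj
    rw [qTrinomial]
    have ht : (∑' (n : ℕ), (q^3) ^ ((n:ℤ) * ((n:ℤ) + (j - 1))) * qPoch (q^3) (q^3) L *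
        qPochInvZ (q^3) (n:ℤ) * qPochInvZ (q^3) ((n:ℤ) + j) *
        qPochInvZ (q^3) ((L:ℤ) - 2*(n:ℤ) - j))
        = ∑ n ∈ Finset.range (L+1), (q^3) ^ ((n:ℤ) * ((n:ℤ) + (j - 1))) * qPoch (q^3) (q^3) L *
        qPochInvZ (q^3) (n:ℤ) * qPochInvZ (q^3) ((n:ℤ) + j) *
        qPochInvZ (q^3) ((L:ℤ) - 2*(n:ℤ) - j) := by
      apply tsum_eq_sum
      intro b hb
      rw [Finset.mem_range] at hb
      have h : (L:ℤ) - 2*(b:ℤ) - j < 0 := by omega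
      rw [qPochInvZ_neg h]
      ring
    rw [ht, Finset.mul_sum]
    apply Finset.sum_congr rfl
    intro n _
    rw [Rterm]
  rw [Finset.sum_congr rfl r1, ← Finset.sum_product']
  -- reduce both sides to filtered sets
  set v : Finset (ℤ × ℕ) := (Finset.Icc (-(L : ℤ)) (L : ℤ) ×ˢ Finset.range (L+1)).filter
    (fun y => 0 ≤ (y.2:ℤ) + y.1 ∧ 2*(y.2:ℤ) + y.1 ≤ L) with hv
  set u : Finset (ℕ × ℕ) := (Finset.range (L+1) ×ˢ Finset.range (L+1)).filter
    (fun x => x.1 + x.2 ≤ L) with hu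
  have rR : ∑ y ∈ Finset.Icc (-(L : ℤ)) (L : ℤ) ×ˢ Finset.range (L+1), Rterm q L y
      = ∑ y ∈ v, Rterm q L y := by
    apply (Finset.sum_subset (Finset.filter_subset _ _) _).symm
    intro y hy hy'
    rw [Finset.mem_filter] at hy'
    have hcond : ¬ (0 ≤ (y.2:ℤ) + y.1 ∧ 2*(y.2:ℤ) + y.1 ≤ L) := fun h => hy' ⟨hy, h⟩
    rw [Rterm]
    rcases lt_or_ge ((y.2:ℤ) + y.1) 0 with hc | hc
    · rw [qPochInvZ_neg hc]
      ring
    · have h2 : (L:ℤ) - 2*(y.2:ℤ) - y.1 < 0 := by omega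
      rw [qPochInvZ_neg h2]
      ring
  have rD : ∑ x ∈ Finset.range (L+1) ×ˢ Finset.range (L+1), Dterm q L x
      = ∑ x ∈ u, Dterm q L x := by
    apply (Finset.sum_subset (Finset.filter_subset _ _) _).symm
    intro x hx hx'
    rw [Finset.mem_filter] at hx'
    have hcond : ¬ (x.1 + x.2 ≤ L) := fun h => hx' ⟨hx, h⟩
    have h2 : (L:ℤ) - x.1 - x.2 < 0 := by omega
    rw [Dterm]
    rw [qPochInvZ_neg h2]
    ring
  rw [rR, rD]
  apply Finset.sum_nbij' (fun y : ℤ × ℕ => ((((L:ℤ) - 2*(y.2:ℤ) - y.1).toNat, y.2) : ℕ × ℕ))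
    (fun x : ℕ × ℕ => (((L:ℤ) - x.1 - 2*(x.2:ℤ), x.2) : ℤ × ℕ))
  · intro y hy
    simp only [hv, hu, Finset.mem_filter, Finset.mem_product, Finset.mem_range,
      Finset.mem_Icc] at hy ⊢
    omega
  · intro x hx
    simp only [hv, hu, Finset.mem_filter, Finset.mem_product, Finset.mem_range,
      Finset.mem_Icc] at hx ⊢
    omega
  · intro y hy
    simp only [hv, Finset.mem_filter, Finset.mem_product, Finset.mem_range,
      Finset.mem_Icc] at hy
    have h1 : ((L:ℤ) - 2*(y.2:ℤ) - y.1).toNat = (L:ℤ) - 2*(y.2:ℤ) - y.1 := by omega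
    apply Prod.ext
    · simp only
      omega
    · simp only
  · intro x hx
    simp only [hu, Finset.mem_filter, Finset.mem_product, Finset.mem_range] at hx
    apply Prod.ext
    · simp only
      omega
    · simp only
  · intro y hy
    simp only [hv, Finset.mem_filter, Finset.mem_product, Finset.mem_range,
      Finset.mem_Icc] at hy
    obtain ⟨⟨⟨hj1, hj2⟩, hn⟩, hc1, hc2⟩ := hy
    obtain ⟨j, n⟩ := y
    simp only at hj1 hj2 hn hc1 hc2 ⊢
    set p : ℕ := ((L:ℤ) - 2*(n:ℤ) - j).toNat with hpdef
    have hp : (p:ℤ) = (L:ℤ) - 2*(n:ℤ) - j := by omega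
    have e1 : (L:ℤ) - (p:ℤ) - (n:ℤ) = (n:ℤ) + j := by omega
    have hC1 : Rterm q L (j, n)
        = q ^ ((2*(L:ℤ) - j) + 3*((n:ℤ) * ((n:ℤ) + (j - 1)))) *
          (qPoch (q^3) (q^3) L * (qPoch (q^3) (q^3) p)⁻¹ * (qPoch (q^3) (q^3) n)⁻¹ *
            qPochInvZ (q^3) ((n:ℤ) + j)) := by
      rw [Rterm]
      simp only
      rw [hQz hq, qPochInvZ_natCast,
        show (L:ℤ) - 2*(n:ℤ) - j = ((p:ℕ):ℤ) from hp.symm, qPochInvZ_natCast]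
      trans ((q ^ (2*(L:ℤ) - j) * q ^ (3*((n:ℤ) * ((n:ℤ) + (j - 1))))) *
          (qPoch (q^3) (q^3) L * (qPoch (q^3) (q^3) p)⁻¹ * (qPoch (q^3) (q^3) n)⁻¹ *
            qPochInvZ (q^3) ((n:ℤ) + j)))
      · ring
      · rw [← zpow_add₀ hq]
    have hC2 : Dterm q L (p, n)
        = q ^ ((2*(L:ℤ) - j) + 3*((n:ℤ) * ((n:ℤ) + (j - 1)))) *
          (qPoch (q^3) (q^3) L * (qPoch (q^3) (q^3) p)⁻¹ * (qPoch (q^3) (q^3) n)⁻¹ *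
            qPochInvZ (q^3) ((n:ℤ) + j)) := by
      rw [Dterm]
      simp only
      rw [e1, hQz hq, ← zpow_natCast q (2*p),
        show ((2*p:ℕ):ℤ) = 2*((L:ℤ) - 2*(n:ℤ) - j) from by omega]
      trans ((q ^ (2*((L:ℤ) - 2*(n:ℤ) - j)) * q ^ ((n:ℤ) + j) * q ^ (3*((n:ℤ) * ((n:ℤ) + j)))) *
          (qPoch (q^3) (q^3) L * (qPoch (q^3) (q^3) p)⁻¹ * (qPoch (q^3) (q^3) n)⁻¹ *
            qPochInvZ (q^3) ((n:ℤ) + j)))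
      · ring
      · rw [← zpow_add₀ hq, ← zpow_add₀ hq,
          show (2*((L:ℤ) - 2*(n:ℤ) - j) + ((n:ℤ) + j)) + 3*((n:ℤ) * ((n:ℤ) + j))
            = (2*(L:ℤ) - j) + 3*((n:ℤ) * ((n:ℤ) + (j - 1))) from by ring]
    rw [hC1, hC2]

theorem capparelli_second_pair (L : ℕ) (q : ℂ) (hq : q ≠ 0) (hroot : ∀ k : ℕ, 0 < k → q ^ k ≠ 1) :
    (∑' n : ℕ, (-1 : ℂ) ^ n * q ^ ((3 * n ^ 2 - n) / 2) * qPoch (q ^ 3) (q ^ 3) L *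
        qPochInvZ q ((L : ℤ) - 2 * n) * (qPoch (q ^ 3) (q ^ 3) n)⁻¹) =
    ∑ j ∈ Finset.Icc (-(L : ℤ)) (L : ℤ),
      q ^ (2 * (L : ℤ) - j) * qTrinomial L (j - 1) j (q ^ 3) := by
  rw [mainLHS L q hq hroot, mainRHS L q hq hroot]
end

section
/- For all nonnegative integers L and M and every nonzero complex number q that is not a root of unity, with a fixed square root q^{1/2}, Σ_{m≥0, m ≡ L (mod 2)} q^{m²/2} [3M choose m]_q [2M + (L-m)/2 choose 2M]_{q³} = Σ_{j ∈ ℤ} q^{(3j²+2j)/2} 𝒯(L, M; j, j; q³), where 𝒯(L, M; a, b; q) := Σ_{n≥0, n ≡ L-a (mod 2)} q^{n²/2} [M choose n]_q [M + b + (L-a-n)/2 choose M+b]_q [M - b + (L+a-n)/2 choose M-b]_q is Warnaar's refined q-trinomial coefficient. -/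
/-- Warnaar's refined q-trinomial coefficient `T(L, M; a, b; q)`, where `s` is a fixed
square root of `q`. -/
noncomputable def qTriW (L M : ℕ) (a b : ℤ) (q s : ℂ) : ℂ :=
  ∑' n : ℕ, if (2 : ℤ) ∣ ((L : ℤ) - a - n) then
      s ^ (n ^ 2) * qBinom (M : ℤ) (n : ℤ) q *
        qBinom ((M : ℤ) + b + ((L : ℤ) - a - n) / 2) ((M : ℤ) + b) q *
        qBinom ((M : ℤ) - b + ((L : ℤ) + a - n) / 2) ((M : ℤ) - b) q
    else 0

/-!
Both sides are coefficients of `x^L` in power series, with `s = q^{1/2}`. By the q-binomial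
theorem the left side is read off `∏_{j<3M} (1 + s^{2j+1} x) / ∏_{j≤2M} (1 - q^{3j} x²)` and the
right side off `∏_{j<M} (1 + s^{3(2j+1)} x) · W_{M,M}(x)`, where the coefficient of `x^k` in
`W_{a,b}` is a sum of products of two q³-binomials weighted by `s^{3j²+2j}`. Splitting `j < 3M`
by residue mod 3 reduces the theorem to
`W_{M,M} · ∏_{j≤2M} (1 - q^{3j} x²) = ∏_{i<M} (1 + s^{6i+1} x) (1 + s^{6i+5} x)`.
The q-Pascal rule, applied to either binomial, gives
`W_{a+1,b} = W_{a,b} + s^{6a+1} x W_{a,b+1}` and `W_{a,b+1} = W_{a,b} + s^{6b+5} x W_{a+1,b}`;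
eliminating one unknown from this pair yields the two factors by which `W_{M,M}` and
`W_{M+1,M+1}` differ, and the product formula follows by induction on `M`.
-/

open PowerSeries Finset

section QBinomial

variable {t : ℂ}

lemma qPoch_self_ne_zero (ht : ∀ k : ℕ, 0 < k → t ^ k ≠ 1) (n : ℕ) : qPoch t t n ≠ 0 :=
  prod_ne_zero_iff.mpr fun j _ h => ht (j + 1) j.succ_pos <| by
    rw [pow_succ']; exact (sub_eq_zero.mp h).symm

lemma qBinom_eq_zero {N k : ℤ} (h : ¬(0 ≤ k ∧ k ≤ N)) : qBinom N k t = 0 := if_neg h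

lemma qBinom_natCast {n k : ℕ} (hk : k ≤ n) :
    qBinom n k t = qPoch t t n * (qPoch t t k)⁻¹ * (qPoch t t (n - k))⁻¹ := by
  rw [qBinom, if_pos (by omega), Int.toNat_natCast, Int.toNat_natCast, ← Nat.cast_sub hk,
    Int.toNat_natCast]

lemma qBinom_symm (N k : ℤ) : qBinom N (N - k) t = qBinom N k t := by
  unfold qBinom
  rw [sub_sub_cancel]
  by_cases h : 0 ≤ k ∧ k ≤ N
  · rw [if_pos h, if_pos (by omega)]
    ring
  · rw [if_neg h, if_neg (by omega)]

variable (hp : ∀ n : ℕ, qPoch t t n ≠ 0)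
include hp

lemma qBinom_zero_right {N : ℤ} (hN : 0 ≤ N) : qBinom N 0 t = 1 := by
  rw [qBinom, if_pos ⟨le_rfl, hN⟩, Int.toNat_zero, sub_zero, show qPoch t t 0 = 1 from
    prod_range_zero _, inv_one, mul_one, mul_inv_cancel₀ (hp _)]

lemma qBinom_self {N : ℤ} (hN : 0 ≤ N) : qBinom N N t = 1 := by
  simpa using (qBinom_symm (t := t) N 0).trans (qBinom_zero_right hp hN)

lemma qBinom_succ {N : ℤ} (hN : 0 ≤ N) (k : ℤ) :
    qBinom (N + 1) k t = qBinom N k t + t ^ (N + 1 - k) * qBinom N (k - 1) t := by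
  lift N to ℕ using hN
  by_cases hk : k < 0 ∨ (N : ℤ) + 1 < k
  · rw [qBinom_eq_zero (by omega), qBinom_eq_zero (by omega), qBinom_eq_zero (N := N) (by omega),
      mul_zero, add_zero]
  rcases eq_or_ne k 0 with rfl | hk0
  · rw [qBinom_zero_right hp (by omega), qBinom_zero_right hp (by omega),
      qBinom_eq_zero (N := N) (by omega), mul_zero, add_zero]
  rcases eq_or_ne k (N + 1) with rfl | hkN
  · rw [qBinom_self hp (by omega), qBinom_eq_zero (N := N) (by omega), sub_self, zpow_zero,
      add_sub_cancel_right, qBinom_self hp (by omega), zero_add, one_mul]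
  obtain ⟨a, b, rfl, rfl⟩ : ∃ a b : ℕ, k = a + 1 ∧ N = a + b + 1 :=
    ⟨k.toNat - 1, N - k.toNat, by omega, by omega⟩
  have hP (n : ℕ) : qPoch t t (n + 1) = qPoch t t n * (1 - t ^ (n + 1)) := by
    rw [qPoch, prod_range_succ, ← pow_succ']; rfl
  have hP' (n : ℕ) : 1 - t ^ (n + 1) ≠ 0 := fun h => hp (n + 1) (by rw [hP, h, mul_zero])
  rw [show ((a + b + 1 : ℕ) : ℤ) + 1 - (a + 1) = (b + 1 : ℕ) by push_cast; ring, zpow_natCast,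
    show ((a + b + 1 : ℕ) : ℤ) + 1 = (a + b + 2 : ℕ) by push_cast; ring, add_sub_cancel_right,
    show (a + 1 : ℤ) = (a + 1 : ℕ) by push_cast; ring, qBinom_natCast (by omega),
    qBinom_natCast (by omega), qBinom_natCast (by omega), show a + b + 2 - (a + 1) = b + 1 by omega,
    show a + b + 1 - (a + 1) = b by omega, show a + b + 1 - a = b + 1 by omega, hP (a + b + 1),
    hP a, hP b]
  have ha := hp a
  have hb := hp b
  have ha' := hP' a
  have hb' := hP' b
  field_simp
  ring

end QBinomial

lemma add_two_mul_choose_two (k : ℕ) : k + 2 * k.choose 2 = k ^ 2 := by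
  rw [Nat.choose_two_right, Nat.mul_div_cancel' (Nat.even_mul_pred_self k).two_dvd]
  rcases k with _ | k
  · rfl
  · rw [Nat.add_sub_cancel]
    ring

lemma coeff_mul_one_sub_C_mul_X (f : PowerSeries ℂ) (a : ℂ) (k : ℕ) :
    coeff (k + 1) (f * (1 - C a * X)) = coeff (k + 1) f - a * coeff k f := by
  rw [mul_sub, mul_one, mul_left_comm, map_sub, coeff_C_mul, coeff_succ_mul_X]

noncomputable def qBinomSeries (t : ℂ) (K : ℕ) : PowerSeries ℂ :=
  mk fun k => qBinom (K + k : ℤ) k t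

section GeneratingFunctions

variable {t : ℂ} (hp : ∀ n : ℕ, qPoch t t n ≠ 0)
include hp

lemma coeff_prod_one_add_C_mul_X (c : ℂ) (N k : ℕ) :
    coeff k (∏ j ∈ range N, (1 + C (c * t ^ j) * X)) =
      c ^ k * t ^ k.choose 2 * qBinom N k t := by
  induction N generalizing k with
  | zero =>
    rcases k with _ | k
    · simp [qBinom_zero_right hp]
    · simp [coeff_one, qBinom_eq_zero (t := t) (N := 0) (k := k + 1) (by omega)]
  | succ N ih =>
    rw [prod_range_succ, mul_add, mul_one, mul_left_comm, map_add, coeff_C_mul]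
    rcases k with _ | k
    · simp [qBinom_zero_right hp (show (0 : ℤ) ≤ N + 1 by positivity)]
    rw [coeff_succ_mul_X, ih, ih, Nat.cast_succ, Nat.cast_succ, qBinom_succ hp (by positivity),
      add_sub_cancel_right, Nat.choose_succ_succ', Nat.choose_one_right]
    rcases le_or_gt k N with hkN | hkN
    · obtain ⟨d, rfl⟩ := Nat.exists_eq_add_of_le hkN
      rw [show ((k + d : ℕ) : ℤ) + 1 - (k + 1) = d by push_cast; ring, zpow_natCast]
      ring
    · rw [qBinom_eq_zero (N := N) (k := k) (by omega)]
      ring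

lemma qBinomSeries_succ_mul (K : ℕ) :
    qBinomSeries t (K + 1) * (1 - C (t ^ (K + 1)) * X) = qBinomSeries t K := by
  ext (_ | k)
  · simp [qBinomSeries, qBinom_zero_right hp (show (0 : ℤ) ≤ K by positivity),
      qBinom_zero_right hp (show (0 : ℤ) ≤ K + 1 by positivity)]
  rw [coeff_mul_one_sub_C_mul_X]
  simp only [qBinomSeries, coeff_mk]
  have h := qBinom_succ hp (show (0 : ℤ) ≤ K + 1 + k by positivity) (k + 1)
  rw [show (K + 1 + k + 1 - (k + 1) : ℤ) = (K + 1 : ℕ) by push_cast; ring, zpow_natCast,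
    add_sub_cancel_right] at h
  push_cast
  rw [show (K + 1 + (k + 1) : ℤ) = K + 1 + k + 1 by ring, h,
    show (K + (k + 1) : ℤ) = K + 1 + k by ring]
  ring

lemma qBinomSeries_mul_prod (K : ℕ) :
    qBinomSeries t K * ∏ j ∈ range (K + 1), (1 - C (t ^ j) * X) = 1 := by
  induction K with
  | zero =>
    ext (_ | k)
    · simp [qBinomSeries, qBinom_zero_right hp le_rfl]
    rw [prod_range_one, pow_zero, coeff_mul_one_sub_C_mul_X, coeff_one, if_neg k.succ_ne_zero]
    simp only [qBinomSeries, coeff_mk, Nat.cast_zero, zero_add, one_mul]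
    rw [qBinom_self hp (by positivity), qBinom_self hp (by positivity), sub_self]
  | succ K ih =>
    rw [prod_range_succ, ← mul_assoc, mul_right_comm, qBinomSeries_succ_mul hp, ih]

lemma expand_qBinomSeries_mul_prod (K : ℕ) :
    expand 2 two_ne_zero (qBinomSeries t K) * ∏ j ∈ range (K + 1), (1 - C (t ^ j) * X ^ 2) =
      1 := by
  simpa [map_prod, expand_C] using congrArg (expand 2 two_ne_zero) (qBinomSeries_mul_prod hp K)

end GeneratingFunctions

lemma coeff_prod_one_add_C_pow_mul_X {s : ℂ} (hp : ∀ n : ℕ, qPoch (s ^ 2) (s ^ 2) n ≠ 0)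
    (N k : ℕ) :
    coeff k (∏ j ∈ range N, (1 + C (s ^ (2 * j + 1)) * X)) =
      s ^ (k ^ 2) * qBinom N k (s ^ 2) := by
  simp_rw [show ∀ j : ℕ, s ^ (2 * j + 1) = s * (s ^ 2) ^ j from fun j => by ring]
  rw [coeff_prod_one_add_C_mul_X hp, ← pow_mul, ← pow_add, add_two_mul_choose_two]

section WarnaarSeries

variable {s : ℂ}

/-- Putting `j = p.2 - p.1` turns this into
`∑_j s^{3j²+2j} [a+j+(k-j)/2, a+j]_{q³} [b-j+(k+j)/2, b-j]_{q³}` over `j ≡ k (mod 2)`. -/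
noncomputable def warnaarCoeff (s : ℂ) (a b k : ℕ) : ℂ :=
  ∑ p ∈ antidiagonal k, s ^ (3 * ((p.2 : ℤ) - p.1) ^ 2 + 2 * ((p.2 : ℤ) - p.1)) *
    qBinom (a + p.2 : ℤ) p.1 (s ^ 6) * qBinom (b + p.1 : ℤ) p.2 (s ^ 6)

noncomputable def warnaarSeries (s : ℂ) (a b : ℕ) : PowerSeries ℂ := mk (warnaarCoeff s a b)

lemma zpow_weight_sub_one (hs : s ≠ 0) (a : ℕ) (n : ℤ) :
    s ^ (3 * (n - 1) ^ 2 + 2 * (n - 1)) * (s ^ 6) ^ ((a : ℤ) + n) =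
      s ^ (6 * a + 1) * s ^ (3 * n ^ 2 + 2 * n) := by
  rw [← zpow_natCast s 6, ← zpow_mul, ← zpow_natCast s (6 * a + 1), ← zpow_add₀ hs,
    ← zpow_add₀ hs]
  congr 1
  push_cast
  ring

lemma zpow_weight_add_one (hs : s ≠ 0) (b : ℕ) (n : ℤ) :
    s ^ (3 * (n + 1) ^ 2 + 2 * (n + 1)) * (s ^ 6) ^ ((b : ℤ) - n) =
      s ^ (6 * b + 5) * s ^ (3 * n ^ 2 + 2 * n) := by
  rw [← zpow_natCast s 6, ← zpow_mul, ← zpow_natCast s (6 * b + 5), ← zpow_add₀ hs,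
    ← zpow_add₀ hs]
  congr 1
  push_cast
  ring

lemma C_pow_mul_X_sq (a b : ℕ) :
    C (s ^ (6 * (a + b + 1))) * X ^ 2 = C (s ^ (6 * a + 1)) * X * (C (s ^ (6 * b + 5)) * X) := by
  rw [show 6 * (a + b + 1) = 6 * a + 1 + (6 * b + 5) by ring, pow_add, map_mul]
  ring

variable (hs : s ≠ 0) (hp : ∀ n : ℕ, qPoch (s ^ 6) (s ^ 6) n ≠ 0)
include hp

lemma warnaarCoeff_zero (a b : ℕ) : warnaarCoeff s a b 0 = 1 := by
  simp [warnaarCoeff, qBinom_zero_right hp]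

lemma warnaarCoeff_zero_zero (k : ℕ) : warnaarCoeff s 0 0 k = if 2 ∣ k then 1 else 0 := by
  have hoff (i j : ℕ) (h : i ≠ j) :
      qBinom (j : ℤ) i (s ^ 6) * qBinom (i : ℤ) j (s ^ 6) = 0 := by
    rcases h.lt_or_gt with h | h
    · rw [qBinom_eq_zero (N := i) (k := j) (by omega), mul_zero]
    · rw [qBinom_eq_zero (N := j) (k := i) (by omega), zero_mul]
  simp only [warnaarCoeff, Nat.cast_zero, zero_add, mul_assoc]
  split_ifs with hk
  · obtain ⟨m, rfl⟩ := hk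
    rw [sum_eq_single_of_mem (m, m) (by simp [two_mul])]
    · simp [qBinom_self hp]
    · rintro ⟨i, j⟩ hij hne
      simp only [HasAntidiagonal.mem_antidiagonal, ne_eq, Prod.mk.injEq] at hij hne
      rw [hoff i j (by omega), mul_zero]
  · refine sum_eq_zero fun ⟨i, j⟩ hij => ?_
    rw [HasAntidiagonal.mem_antidiagonal] at hij
    rw [hoff i j (by omega), mul_zero]

lemma warnaarSeries_zero_zero :
    warnaarSeries s 0 0 = expand 2 two_ne_zero (qBinomSeries (s ^ 6) 0) := by
  ext k
  rw [coeff_expand, warnaarSeries, coeff_mk, warnaarCoeff_zero_zero hp]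
  split_ifs <;> simp [qBinomSeries, qBinom_self hp]

include hs

lemma warnaarCoeff_succ_left (a b k : ℕ) :
    warnaarCoeff s (a + 1) b (k + 1) =
      warnaarCoeff s a b (k + 1) + s ^ (6 * a + 1) * warnaarCoeff s a (b + 1) k := by
  unfold warnaarCoeff
  rw [Nat.sum_antidiagonal_succ, Nat.sum_antidiagonal_succ, add_assoc, mul_sum, ← sum_add_distrib]
  congr 1
  · push_cast
    simp (disch := positivity) only [qBinom_zero_right hp]
  refine sum_congr rfl fun ⟨i, j⟩ _ => ?_
  push_cast
  rw [show (a + 1 + j : ℤ) = a + j + 1 by ring, qBinom_succ hp (by positivity),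
    add_sub_cancel_right, show (a + j + 1 - (i + 1) : ℤ) = a + (j - i) by ring,
    show (j - (i + 1) : ℤ) = j - i - 1 by ring, show (b + (i + 1) : ℤ) = b + 1 + i by ring]
  linear_combination qBinom (a + j : ℤ) i (s ^ 6) * qBinom (b + 1 + i : ℤ) j (s ^ 6) *
    zpow_weight_sub_one hs a (j - i)

lemma warnaarCoeff_succ_right (a b k : ℕ) :
    warnaarCoeff s a (b + 1) (k + 1) =
      warnaarCoeff s a b (k + 1) + s ^ (6 * b + 5) * warnaarCoeff s (a + 1) b k := by
  unfold warnaarCoeff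
  rw [Nat.sum_antidiagonal_succ', Nat.sum_antidiagonal_succ', add_assoc, mul_sum,
    ← sum_add_distrib]
  congr 1
  · push_cast
    simp (disch := positivity) only [qBinom_zero_right hp]
  refine sum_congr rfl fun ⟨i, j⟩ _ => ?_
  push_cast
  rw [show (b + 1 + i : ℤ) = b + i + 1 by ring, qBinom_succ hp (by positivity),
    add_sub_cancel_right, show (b + i + 1 - (j + 1) : ℤ) = b - (j - i) by ring,
    show (j + 1 - i : ℤ) = j - i + 1 by ring, show (a + (j + 1) : ℤ) = a + 1 + j by ring]
  linear_combination qBinom (a + 1 + j : ℤ) i (s ^ 6) * qBinom (b + i : ℤ) j (s ^ 6) *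
    zpow_weight_add_one hs b (j - i)

lemma warnaarSeries_succ_left (a b : ℕ) :
    warnaarSeries s (a + 1) b =
      warnaarSeries s a b + C (s ^ (6 * a + 1)) * X * warnaarSeries s a (b + 1) := by
  ext (_ | k)
  · simp [warnaarSeries, warnaarCoeff_zero hp]
  rw [map_add, mul_assoc, coeff_C_mul, coeff_succ_X_mul]
  simp only [warnaarSeries, coeff_mk]
  exact warnaarCoeff_succ_left hs hp a b k

lemma warnaarSeries_succ_right (a b : ℕ) :
    warnaarSeries s a (b + 1) =
      warnaarSeries s a b + C (s ^ (6 * b + 5)) * X * warnaarSeries s (a + 1) b := by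
  ext (_ | k)
  · simp [warnaarSeries, warnaarCoeff_zero hp]
  rw [map_add, mul_assoc, coeff_C_mul, coeff_succ_X_mul]
  simp only [warnaarSeries, coeff_mk]
  exact warnaarCoeff_succ_right hs hp a b k

lemma warnaarSeries_succ_left_mul (a b : ℕ) :
    warnaarSeries s (a + 1) b * (1 - C (s ^ (6 * (a + b + 1))) * X ^ 2) =
      warnaarSeries s a b * (1 + C (s ^ (6 * a + 1)) * X) := by
  linear_combination warnaarSeries_succ_left hs hp a b +
    C (s ^ (6 * a + 1)) * X * warnaarSeries_succ_right hs hp a b -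
    warnaarSeries s (a + 1) b * C_pow_mul_X_sq a b

lemma warnaarSeries_succ_right_mul (a b : ℕ) :
    warnaarSeries s a (b + 1) * (1 - C (s ^ (6 * (a + b + 1))) * X ^ 2) =
      warnaarSeries s a b * (1 + C (s ^ (6 * b + 5)) * X) := by
  linear_combination warnaarSeries_succ_right hs hp a b +
    C (s ^ (6 * b + 5)) * X * warnaarSeries_succ_left hs hp a b -
    warnaarSeries s a (b + 1) * C_pow_mul_X_sq a b

lemma warnaarSeries_mul_prod (M : ℕ) :
    warnaarSeries s M M * ∏ j ∈ range (2 * M + 1), (1 - C ((s ^ 6) ^ j) * X ^ 2) =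
      ∏ i ∈ range M, ((1 + C (s ^ (6 * i + 1)) * X) * (1 + C (s ^ (6 * i + 5)) * X)) := by
  induction M with
  | zero => simpa [warnaarSeries_zero_zero hp] using expand_qBinomSeries_mul_prod hp 0
  | succ M ih =>
    rw [show 2 * (M + 1) + 1 = 2 * M + 1 + 1 + 1 by ring, prod_range_succ _ (2 * M + 1 + 1),
      prod_range_succ _ (2 * M + 1), prod_range_succ _ M, ← ih,
      show (s ^ 6) ^ (2 * M + 1) = s ^ (6 * (M + M + 1)) by ring,
      show (s ^ 6) ^ (2 * M + 1 + 1) = s ^ (6 * (M + (M + 1) + 1)) by ring]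
    linear_combination
      (∏ j ∈ range (2 * M + 1), (1 - C ((s ^ 6) ^ j) * X ^ 2)) *
        ((1 - C (s ^ (6 * (M + M + 1))) * X ^ 2) * warnaarSeries_succ_left_mul hs hp M (M + 1) +
          (1 + C (s ^ (6 * M + 1)) * X) * warnaarSeries_succ_right_mul hs hp M M)

end WarnaarSeries

lemma prod_range_three_mul {R : Type*} [CommMonoid R] (f : ℕ → R) (M : ℕ) :
    ∏ j ∈ range (3 * M), f j =
      (∏ i ∈ range M, f (3 * i + 1)) * ∏ i ∈ range M, (f (3 * i) * f (3 * i + 2)) := by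
  induction M with
  | zero => simp
  | succ M ih =>
    rw [show 3 * (M + 1) = 3 * M + 1 + 1 + 1 by ring]
    simp only [prod_range_succ, ih]
    ac_rfl

lemma prod_range_three_mul_one_add_C_pow_mul_X (s : ℂ) (M : ℕ) :
    ∏ j ∈ range (3 * M), (1 + C (s ^ (2 * j + 1)) * X) =
      (∏ j ∈ range M, (1 + C ((s ^ 3) ^ (2 * j + 1)) * X)) *
        ∏ i ∈ range M, ((1 + C (s ^ (6 * i + 1)) * X) * (1 + C (s ^ (6 * i + 5)) * X)) := by
  rw [prod_range_three_mul]
  refine congrArg₂ (· * ·) (prod_congr rfl fun i _ => ?_) (prod_congr rfl fun i _ => ?_)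
  · rw [← pow_mul, show 2 * (3 * i + 1) + 1 = 3 * (2 * i + 1) by ring]
  · rw [show 2 * (3 * i) + 1 = 6 * i + 1 by ring, show 2 * (3 * i + 2) + 1 = 6 * i + 5 by ring]

lemma tsum_eq_coeff_prod_mul_expand {s : ℂ} (hp : ∀ n : ℕ, qPoch (s ^ 2) (s ^ 2) n ≠ 0)
    (t : ℂ) (L N K : ℕ) :
    (∑' m : ℕ, if m % 2 = L % 2 then
        s ^ (m ^ 2) * qBinom N m (s ^ 2) * qBinom (K + ((L : ℤ) - m) / 2) K t else 0) =
      coeff L ((∏ j ∈ range N, (1 + C (s ^ (2 * j + 1)) * X)) *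
        expand 2 two_ne_zero (qBinomSeries t K)) := by
  rw [tsum_eq_sum (s := range (L + 1)) fun m hm => ?_, coeff_mul,
    Nat.sum_antidiagonal_eq_sum_range_succ_mk]
  · refine sum_congr rfl fun m hm => ?_
    have hmL : m ≤ L := Nat.lt_succ_iff.mp (mem_range.mp hm)
    dsimp only
    rw [coeff_prod_one_add_C_pow_mul_X hp, coeff_expand]
    by_cases h : m % 2 = L % 2
    · rw [if_pos h, if_pos (by omega), qBinomSeries, coeff_mk,
        ← qBinom_symm (K + ((L : ℤ) - m) / 2) K]
      congr 2 <;> omega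
    · rw [if_neg h, if_neg (by omega), mul_zero]
  · split_ifs
    · exact mul_eq_zero_of_right _ (qBinom_eq_zero (by rw [mem_range] at hm; omega))
    · rfl

lemma qTriW_eq_zero_of_lt_abs (L M : ℕ) (a : ℤ) {b : ℤ} (hb : (M : ℤ) < |b|) (q s : ℂ) :
    qTriW L M a b q s = 0 := by
  refine (tsum_congr fun n => ?_).trans tsum_zero
  split_ifs
  · rcases lt_abs.mp hb with hb | hb
    · exact mul_eq_zero_of_right _ (qBinom_eq_zero (by omega))
    · exact mul_eq_zero_of_left (mul_eq_zero_of_right _ (qBinom_eq_zero (by omega))) _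
  · rfl

lemma qTriW_eq_sum_antidiagonal (L M : ℕ) (a b : ℤ) (q s : ℂ) :
    qTriW L M a b q s = ∑ p ∈ antidiagonal L, if (2 : ℤ) ∣ (p.2 : ℤ) - a then
      s ^ (p.1 ^ 2) * qBinom M p.1 q * qBinom (M + b + ((p.2 : ℤ) - a) / 2) (M + b) q *
        qBinom (M - b + ((p.2 : ℤ) + a) / 2) (M - b) q else 0 := by
  rw [qTriW, tsum_eq_sum (s := range (L + 1)) fun n hn => ?_,
    Nat.sum_antidiagonal_eq_sum_range_succ_mk]
  · refine sum_congr rfl fun n hn => ?_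
    rw [show ((L - n : ℕ) : ℤ) = L - n by rw [mem_range] at hn; omega,
      sub_right_comm (L : ℤ) a, add_sub_right_comm (L : ℤ) a]
  · simp only [mem_range, not_lt] at hn
    split_ifs
    · by_cases hd : ((L : ℤ) - a - n) / 2 < 0
      · exact mul_eq_zero_of_left (mul_eq_zero_of_right _ (qBinom_eq_zero (by omega))) _
      · exact mul_eq_zero_of_right _ (qBinom_eq_zero (by omega))
    · rfl

lemma sum_Icc_eq_warnaarCoeff (s : ℂ) (M k : ℕ) :
    ∑ j ∈ Icc (-(M : ℤ)) M, (if (2 : ℤ) ∣ (k : ℤ) - j then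
      s ^ (3 * j ^ 2 + 2 * j) * (qBinom (M + j + ((k : ℤ) - j) / 2) (M + j) (s ^ 6) *
        qBinom (M - j + ((k : ℤ) + j) / 2) (M - j) (s ^ 6)) else 0) = warnaarCoeff s M M k := by
  rw [sum_congr_of_eq_on_inter (s₂ := (antidiagonal k).image fun p => (p.2 : ℤ) - p.1)
    (fun j _ hj => ?_) (fun j _ hj => ?_) fun _ _ _ => rfl, sum_image fun p hp q hq h => ?_]
  · refine sum_congr rfl fun ⟨x, y⟩ hxy => ?_
    obtain rfl : x + y = k := mem_antidiagonal.mp hxy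
    dsimp only
    push_cast
    rw [if_pos ⟨x, by ring⟩, show ((x + y : ℤ) - (y - x)) / 2 = x by omega,
      show ((x + y : ℤ) + (y - x)) / 2 = y by omega, ← qBinom_symm (M + y : ℤ) x,
      ← qBinom_symm (M + x : ℤ) y]
    ring_nf
  · simp only [mem_coe, HasAntidiagonal.mem_antidiagonal] at hp hq
    exact Prod.ext (by omega) (by omega)
  · simp only [mem_image, HasAntidiagonal.mem_antidiagonal, Prod.exists, not_exists, not_and] at hj
    split_ifs with hkj
    · by_cases hx : 0 ≤ ((k : ℤ) - j) / 2
      · refine mul_eq_zero_of_right _ (mul_eq_zero_of_right _ (qBinom_eq_zero fun hc => ?_))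
        exact hj (((k : ℤ) - j) / 2).toNat (((k : ℤ) + j) / 2).toNat (by omega) (by omega)
      · exact mul_eq_zero_of_right _ (mul_eq_zero_of_left (qBinom_eq_zero (by omega)) _)
    · rfl
  · rw [mem_Icc] at hj
    split_ifs
    · by_cases hjM : j < -M
      · exact mul_eq_zero_of_right _ (mul_eq_zero_of_left (qBinom_eq_zero (by omega)) _)
      · exact mul_eq_zero_of_right _ (mul_eq_zero_of_right _ (qBinom_eq_zero (by omega)))
    · rfl

lemma tsum_qTriW_eq_coeff {s : ℂ} (hp : ∀ n : ℕ, qPoch (s ^ 6) (s ^ 6) n ≠ 0) (L M : ℕ) :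
    ∑' j : ℤ, s ^ (3 * j ^ 2 + 2 * j) * qTriW L M j j (s ^ 6) (s ^ 3) =
      coeff L ((∏ j ∈ range M, (1 + C ((s ^ 3) ^ (2 * j + 1)) * X)) * warnaarSeries s M M) := by
  have hs6 : (s ^ 3) ^ 2 = s ^ 6 := by ring
  rw [tsum_eq_sum (s := Icc (-(M : ℤ)) M) fun j hj => by
    rw [qTriW_eq_zero_of_lt_abs L M j (lt_abs.mpr (by simp only [mem_Icc] at hj; omega)), mul_zero]]
  simp_rw [qTriW_eq_sum_antidiagonal, mul_sum]
  rw [sum_comm, coeff_mul]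
  refine sum_congr rfl fun ⟨n, k⟩ _ => ?_
  rw [coeff_prod_one_add_C_pow_mul_X (hs6 ▸ hp), hs6, warnaarSeries, coeff_mk,
    ← sum_Icc_eq_warnaarCoeff, mul_sum]
  refine sum_congr rfl fun j _ => ?_
  split_ifs <;> ring

theorem doubly_bounded_warnaar (L M : ℕ) (q s : ℂ) (hs : s ^ 2 = q) (hq : q ≠ 0) (hroot : ∀ k : ℕ, 0 < k → q ^ k ≠ 1) :
    (∑' m : ℕ, if m % 2 = L % 2 then
        s ^ (m ^ 2) * qBinom (3 * (M : ℤ)) (m : ℤ) q *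
          qBinom (2 * (M : ℤ) + ((L : ℤ) - m) / 2) (2 * (M : ℤ)) (q ^ 3)
      else 0) =
    ∑' j : ℤ, s ^ (3 * j ^ 2 + 2 * j) * qTriW L M j j (q ^ 3) (s ^ 3) := by
  subst hs
  have hs : s ≠ 0 := (pow_ne_zero_iff two_ne_zero).mp hq
  have hq3 : (s ^ 2) ^ 3 = s ^ 6 := by ring
  have hp2 : ∀ n, qPoch (s ^ 2) (s ^ 2) n ≠ 0 := qPoch_self_ne_zero hroot
  have hp6 : ∀ n, qPoch (s ^ 6) (s ^ 6) n ≠ 0 := qPoch_self_ne_zero fun k hk => by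
    rw [← hq3, ← pow_mul]
    exact hroot _ (by positivity)
  have hlhs := tsum_eq_coeff_prod_mul_expand hp2 (s ^ 6) L (3 * M) (2 * M)
  push_cast at hlhs
  rw [hq3, hlhs, tsum_qTriW_eq_coeff hp6, prod_range_three_mul_one_add_C_pow_mul_X,
    ← warnaarSeries_mul_prod hs hp6 M]
  congr 1
  linear_combination (∏ j ∈ range M, (1 + C ((s ^ 3) ^ (2 * j + 1)) * X)) *
    warnaarSeries s M M * expand_qBinomSeries_mul_prod hp6 (2 * M)
end
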